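/- If 𝒳 ⊂ ℝ^d is a compact convex set with nonempty interior and Q is a probability measure supported in 𝒳 with a Lebesgue density bounded above by q̄ < ∞, then sup_{L>0} L^{1/d} ∫_𝒳 exp(−L·δ(x)^d) dQ(x) < ∞, where δ(x) is the Euclidean distance from x to 𝒳ᶜ; that is, Condition (A) holds. -/

import Mathlib

open MeasureTheory ProbabilityTheory Filter Set
open scoped ENNReal NNReal Classical

noncomputable section

abbrev Euc (d : ℕ) : Type := EuclideanSpace ℝ (Fin d)

/-- Condition (X2) with constant `c`. -/
def CondX2 {d : ℕ} (𝒳 : Set (Euc d)) (c : ℝ) : Prop :=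
  ∀ x ∈ 𝒳, ∀ r : ℝ, 0 ≤ r → r ≤ Metric.diam 𝒳 →
    ENNReal.ofReal c * volume (Metric.closedBall x r) ≤ volume (Metric.closedBall x r ∩ 𝒳)

/-- Condition (A). -/
def CondA {d : ℕ} (𝒳 : Set (Euc d)) (Q : Measure (Euc d)) : Prop :=
  ∃ M : ℝ, ∀ L : ℝ, 0 < L →
    L ^ ((1 : ℝ) / d) * ∫ x, Real.exp (-L * Metric.infDist x 𝒳ᶜ ^ d) ∂Q ≤ M

lemma collar_bound {d : ℕ} (hd : 1 ≤ d) (𝒳 : Set (Euc d)) (hcomp : IsCompact 𝒳)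
    (hconv : Convex ℝ 𝒳) {x0 : Euc d} {r : ℝ} (hr : 0 < r) (hball : Metric.ball x0 r ⊆ 𝒳)
    (hne : 𝒳ᶜ.Nonempty) (ε : ℝ) (hε : 0 ≤ ε) :
    volume {x | x ∈ 𝒳 ∧ Metric.infDist x 𝒳ᶜ < ε} ≤
      ENNReal.ofReal (d * (volume 𝒳).toReal / r * ε) := by
  have hx0 : x0 ∈ 𝒳 := hball (Metric.mem_ball_self hr)
  have hVfin : volume 𝒳 ≠ ∞ := hcomp.measure_lt_top.ne
  set V : ℝ := (volume 𝒳).toReal with hV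
  have hV0 : 0 ≤ V := ENNReal.toReal_nonneg
  have hvol : volume 𝒳 = ENNReal.ofReal V := (ENNReal.ofReal_toReal hVfin).symm
  by_cases hεr : r ≤ ε
  · calc volume {x | x ∈ 𝒳 ∧ Metric.infDist x 𝒳ᶜ < ε} ≤ volume 𝒳 := by
          apply measure_mono; intro x hx; exact hx.1
      _ ≤ ENNReal.ofReal (d * V / r * ε) := by
          rw [hvol]
          apply ENNReal.ofReal_le_ofReal
          rw [div_mul_eq_mul_div, le_div_iff₀ hr]
          have hd1 : (1:ℝ) ≤ d := by exact_mod_cast hd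
          nlinarith [mul_nonneg (mul_nonneg (sub_nonneg.2 hd1) hV0) hε, mul_nonneg hV0 (sub_nonneg.2 hεr)]
  · push_neg at hεr
    set t : ℝ := ε / r with ht
    have ht0 : 0 ≤ t := div_nonneg hε hr.le
    have ht1 : t < 1 := (div_lt_one hr).2 hεr
    have htr : t * r = ε := div_mul_cancel₀ ε hr.ne'
    set A : Set (Euc d) := AffineMap.homothety x0 (1 - t) '' 𝒳 with hA
    have hcomb : ∀ y : Euc d, AffineMap.homothety x0 (1 - t) y = (1 - t) • y + t • x0 := by
      intro y
      simp only [AffineMap.homothety_apply, vsub_eq_sub, vadd_eq_add]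
      module
    have hA𝒳 : A ⊆ 𝒳 := by
      rintro p ⟨y, hy, rfl⟩
      rw [hcomb]
      exact hconv hy hx0 (by linarith) ht0 (by ring)
    have hAdist : ∀ p ∈ A, ε ≤ Metric.infDist p 𝒳ᶜ := by
      rintro p ⟨y, hy, rfl⟩
      by_contra hlt
      push_neg at hlt
      obtain ⟨z, hz, hdz⟩ := (Metric.infDist_lt_iff hne).1 hlt
      rcases eq_or_lt_of_le hε with hε0 | hε0
      · exact absurd (Metric.infDist_nonneg) (by rw [← hε0] at hlt; exact not_le.2 hlt)
      have htpos : 0 < t := div_pos hε0 hr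
      set p := AffineMap.homothety x0 (1 - t) y
      set w : Euc d := x0 + t⁻¹ • (z - p) with hw
      have hwball : w ∈ Metric.ball x0 r := by
        rw [Metric.mem_ball, dist_eq_norm]
        have : w - x0 = t⁻¹ • (z - p) := by rw [hw]; abel
        rw [this, norm_smul, Real.norm_eq_abs, abs_of_pos (inv_pos.2 htpos)]
        have hzp : ‖z - p‖ < ε := by rw [dist_comm, dist_eq_norm] at hdz; exact hdz
        calc t⁻¹ * ‖z - p‖ < t⁻¹ * ε := by
              exact mul_lt_mul_of_pos_left hzp (inv_pos.2 htpos)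
          _ = r := by field_simp [ht]; exact htr.symm
      have hzcomb : z = (1 - t) • y + t • w := by
        have hp : p = (1 - t) • y + t • x0 := hcomb y
        rw [hw, smul_add, smul_smul, mul_inv_cancel₀ htpos.ne', one_smul, hp]
        abel
      have : z ∈ 𝒳 := by
        rw [hzcomb]
        exact hconv hy (hball hwball) (by linarith) ht0 (by ring)
      exact hz this
    have hsub : {x | x ∈ 𝒳 ∧ Metric.infDist x 𝒳ᶜ < ε} ⊆ 𝒳 \ A := by
      intro x ⟨hx1, hx2⟩
      refine ⟨hx1, fun hxA => ?_⟩
      exact absurd hx2 (not_lt.2 (hAdist x hxA))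
    have hAmeas : MeasurableSet A := by
      have : IsCompact A := hcomp.image (AffineMap.homothety x0 (1 - t)).continuous_of_finiteDimensional
      exact this.isClosed.measurableSet
    have hAvol : volume A = ENNReal.ofReal ((1 - t) ^ d) * volume 𝒳 := by
      rw [hA, Measure.addHaar_image_homothety]
      congr 2
      rw [abs_of_nonneg (pow_nonneg (by linarith) _)]
      congr 1
      simp [finrank_euclideanSpace]
    calc volume {x | x ∈ 𝒳 ∧ Metric.infDist x 𝒳ᶜ < ε} ≤ volume (𝒳 \ A) :=
          measure_mono hsub
      _ = volume 𝒳 - volume A := measure_diff hA𝒳 hAmeas.nullMeasurableSet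
            (lt_of_le_of_lt (measure_mono hA𝒳) hcomp.measure_lt_top).ne
      _ ≤ ENNReal.ofReal (d * V / r * ε) := by
          rw [hAvol, hvol, ← ENNReal.ofReal_mul (pow_nonneg (by linarith) _), ← ENNReal.ofReal_sub _ (mul_nonneg (pow_nonneg (by linarith) _) hV0)]
          apply ENNReal.ofReal_le_ofReal
          have hber : 1 - d * t ≤ (1 - t) ^ d := by
            have := one_add_mul_le_pow (a := -t) (by linarith) d
            simp only [← sub_eq_add_neg, mul_neg] at this
            exact this
          have : d * V / r * ε = d * t * V := by
            rw [ht]; field_simp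
          rw [this]
          nlinarith [mul_le_mul_of_nonneg_right hber hV0]


lemma density_collar {d : ℕ} (hd : 1 ≤ d) (𝒳 : Set (Euc d)) (hcomp : IsCompact 𝒳)
    (hconv : Convex ℝ 𝒳) {x0 : Euc d} {r : ℝ} (hr : 0 < r) (hball : Metric.ball x0 r ⊆ 𝒳)
    (hne : 𝒳ᶜ.Nonempty) (Q : Measure (Euc d)) (q : Euc d → ℝ)
    (hQd : Q = volume.withDensity fun x => ENNReal.ofReal (q x))
    (hqsupp : ∀ x ∉ 𝒳, q x = 0)
    {K : ℝ} (hK0 : 0 ≤ K) (hqK : ∀ x, q x ≤ K) (ε : ℝ) (hε : 0 ≤ ε) :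
    Q {x | Metric.infDist x 𝒳ᶜ < ε} ≤
      ENNReal.ofReal (K * (d * (volume 𝒳).toReal / r * ε)) := by
  have hScont : Continuous fun x : Euc d => Metric.infDist x 𝒳ᶜ :=
    Metric.continuous_infDist_pt _
  set S : Set (Euc d) := {x | Metric.infDist x 𝒳ᶜ < ε} with hS
  have hSmeas : MeasurableSet S := measurableSet_lt hScont.measurable measurable_const
  set T : Set (Euc d) := {x | x ∈ 𝒳 ∧ Metric.infDist x 𝒳ᶜ < ε} with hT
  have hTmeas : MeasurableSet T := by
    have : T = 𝒳 ∩ S := by ext x; simp [hT, hS, mem_setOf_eq]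
    rw [this]
    exact hcomp.isClosed.measurableSet.inter hSmeas
  have h1 : Q S = ∫⁻ x, S.indicator (fun x => ENNReal.ofReal (q x)) x ∂volume := by
    rw [hQd, withDensity_apply _ hSmeas, lintegral_indicator hSmeas]
  have h2 : ∀ x, S.indicator (fun x => ENNReal.ofReal (q x)) x ≤
      T.indicator (fun _ => ENNReal.ofReal K) x := by
    intro x
    by_cases hxS : x ∈ S
    · rw [indicator_of_mem hxS]
      by_cases hx𝒳 : x ∈ 𝒳
      · have hxT : x ∈ T := ⟨hx𝒳, hxS⟩
        rw [indicator_of_mem hxT]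
        exact ENNReal.ofReal_le_ofReal (hqK x)
      · rw [hqsupp x hx𝒳]
        simp
    · rw [indicator_of_notMem hxS]
      exact zero_le (a := _)
  calc Q S ≤ ∫⁻ x, T.indicator (fun _ => ENNReal.ofReal K) x ∂volume := by
        rw [h1]; exact lintegral_mono h2
    _ = ENNReal.ofReal K * volume T := lintegral_indicator_const hTmeas _
    _ ≤ ENNReal.ofReal K * ENNReal.ofReal (d * (volume 𝒳).toReal / r * ε) := by
        exact mul_le_mul_right (collar_bound hd 𝒳 hcomp hconv hr hball hne ε hε) _
    _ = ENNReal.ofReal (K * (d * (volume 𝒳).toReal / r * ε)) :=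
        (ENNReal.ofReal_mul hK0).symm


/-- Theorem 5, convex case, Condition (A): if 𝒳 is compact convex with
nonempty interior and Q is a probability measure supported in 𝒳 with a Lebesgue density bounded
above, then Condition (A) holds. -/
theorem statement11 {d : ℕ} (hd : 1 ≤ d) (𝒳 : Set (Euc d))
    (hcomp : IsCompact 𝒳) (hconv : Convex ℝ 𝒳) (hint : (interior 𝒳).Nonempty)
    (Q : Measure (Euc d)) [IsProbabilityMeasure Q] (q : Euc d → ℝ)
    (hQd : Q = volume.withDensity fun x => ENNReal.ofReal (q x))
    (hqsupp : ∀ x ∉ 𝒳, q x = 0)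
    {qmax : ℝ} (hqub : ∀ x, q x ≤ qmax) :
    CondA 𝒳 Q := by
  have hd0 : d ≠ 0 := by omega
  have hdR : (0:ℝ) < d := by exact_mod_cast Nat.pos_of_ne_zero hd0
  -- ball inside 𝒳
  obtain ⟨x0, hx0⟩ := hint
  obtain ⟨r, hr, hball⟩ := Metric.isOpen_iff.1 isOpen_interior x0 hx0
  have hball : Metric.ball x0 r ⊆ 𝒳 := hball.trans interior_subset
  -- complement nonempty
  have hne : 𝒳ᶜ.Nonempty := by
    obtain ⟨R, hR⟩ := hcomp.isBounded.subset_closedBall x0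
    haveI : Nonempty (Fin d) := ⟨⟨0, hd⟩⟩
    refine ⟨x0 + (|R| + 1) • EuclideanSpace.single ⟨0, hd⟩ (1:ℝ), fun hmem => ?_⟩
    have h1 := hR hmem
    rw [Metric.mem_closedBall, dist_eq_norm] at h1
    have h2 : x0 + (|R| + 1) • EuclideanSpace.single (⟨0, hd⟩ : Fin d) (1:ℝ) - x0
        = (|R| + 1) • EuclideanSpace.single (⟨0, hd⟩ : Fin d) (1:ℝ) := by abel
    rw [h2, norm_smul, Real.norm_eq_abs, EuclideanSpace.norm_single] at h1
    simp only [norm_one, mul_one] at h1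
    have : (0:ℝ) ≤ |R| + 1 := by positivity
    rw [abs_of_nonneg this] at h1
    have := abs_nonneg R
    linarith [le_abs_self R]
  -- constants
  set K : ℝ := max qmax 0 with hK
  have hK0 : 0 ≤ K := le_max_right _ _
  have hqK : ∀ x, q x ≤ K := fun x => (hqub x).trans (le_max_left _ _)
  set C : ℝ := d * (volume 𝒳).toReal / r with hC
  have hC0 : 0 ≤ C := by positivity
  set E : ℝ := Real.exp 1 with hE
  have hE2 : (2:ℝ) < E := by
    have := Real.exp_one_gt_d9
    rw [hE]; linarith
  have hEpos : (0:ℝ) < E := by linarith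
  have hgeo : ENNReal.ofReal (2 / E) < 1 := by
    rw [ENNReal.ofReal_lt_one]
    rw [div_lt_one hEpos]; linarith
  set Mtop : ℝ≥0∞ := ENNReal.ofReal (2 * (K * C)) * (1 - ENNReal.ofReal (2 / E))⁻¹ with hMtop
  have hMtopne : Mtop ≠ ∞ := by
    apply ENNReal.mul_ne_top ENNReal.ofReal_ne_top
    rw [ENNReal.inv_ne_top]
    simp only [ne_eq, tsub_eq_zero_iff_le, not_le]
    exact hgeo
  refine ⟨Mtop.toReal, fun L hL => ?_⟩
  -- notation
  set δ : Euc d → ℝ := fun x => Metric.infDist x 𝒳ᶜ with hδdef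
  have hδcont : Continuous δ := Metric.continuous_infDist_pt _
  have hδ0 : ∀ x, 0 ≤ δ x := fun x => Metric.infDist_nonneg
  set f : Euc d → ℝ := fun x => Real.exp (-L * δ x ^ d) with hf
  have hfcont : Continuous f := by
    apply Real.continuous_exp.comp
    exact (continuous_const.mul (hδcont.pow d))
  set I : ℝ≥0∞ := ∫⁻ x, ENNReal.ofReal (f x) ∂Q with hI
  have hint_eq : ∫ x, f x ∂Q = I.toReal := by
    rw [hI]
    exact integral_eq_lintegral_of_nonneg_ae (Eventually.of_forall fun x => Real.exp_pos _ |>.le)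
      hfcont.aestronglyMeasurable
  -- epsilon sequence
  set εk : ℕ → ℝ := fun k => (((k:ℝ) + 2) / L) ^ ((1:ℝ)/d) with hεk
  have hεk0 : ∀ k, 0 ≤ εk k := fun k => Real.rpow_nonneg (by positivity) _
  have hεkpow : ∀ k : ℕ, εk k ^ d = ((k:ℝ) + 2) / L := by
    intro k
    rw [hεk]
    rw [← Real.rpow_natCast ((((k:ℝ) + 2) / L) ^ ((1:ℝ)/d)) d, ← Real.rpow_mul (by positivity)]
    rw [one_div_mul_cancel (by exact_mod_cast hd0 : (d:ℝ) ≠ 0), Real.rpow_one]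
  set Sk : ℕ → Set (Euc d) := fun k => {x | δ x < εk k} with hSk
  have hSkmeas : ∀ k, MeasurableSet (Sk k) :=
    fun k => measurableSet_lt hδcont.measurable measurable_const
  -- pointwise bound
  have hpt : ∀ x, ENNReal.ofReal (f x) ≤
      ∑' k : ℕ, (Sk k).indicator (fun _ => ENNReal.ofReal (Real.exp (-(k:ℝ)))) x := by
    intro x
    set u : ℝ := L * δ x ^ d with hu
    have hu0 : 0 ≤ u := by
      have := hδ0 x
      positivity
    set k0 : ℕ := ⌊u⌋₊ with hk0
    have hmem : x ∈ Sk k0 := by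
      simp only [hSk, mem_setOf_eq]
      by_contra hcon
      push_neg at hcon
      have h2 : εk k0 ^ d ≤ δ x ^ d := pow_le_pow_left₀ (hεk0 k0) hcon d
      rw [hεkpow k0] at h2
      have h3 : ((k0:ℝ) + 2) ≤ δ x ^ d * L := (div_le_iff₀ hL).1 h2
      have h4 : u < k0 + 1 := Nat.lt_floor_add_one u
      rw [hu] at h4
      nlinarith
    refine le_trans ?_ (ENNReal.le_tsum k0)
    rw [indicator_of_mem hmem]
    apply ENNReal.ofReal_le_ofReal
    apply Real.exp_le_exp.2
    have h5 : -L * δ x ^ d = -u := by rw [hu]; ring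
    rw [h5]
    exact neg_le_neg (Nat.floor_le hu0)
  -- integral bound
  have hIbound : I ≤ ∑' k : ℕ, ENNReal.ofReal (Real.exp (-(k:ℝ))) * Q (Sk k) := by
    calc I ≤ ∫⁻ x, ∑' k : ℕ, (Sk k).indicator
            (fun _ => ENNReal.ofReal (Real.exp (-(k:ℝ)))) x ∂Q := lintegral_mono hpt
      _ = ∑' k : ℕ, ∫⁻ x, (Sk k).indicator
            (fun _ => ENNReal.ofReal (Real.exp (-(k:ℝ)))) x ∂Q :=
          lintegral_tsum fun k => (measurable_const.indicator (hSkmeas k)).aemeasurable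
      _ = ∑' k : ℕ, ENNReal.ofReal (Real.exp (-(k:ℝ))) * Q (Sk k) := by
          congr 1; ext k; exact lintegral_indicator_const (hSkmeas k) _
  have hQSk : ∀ k, Q (Sk k) ≤ ENNReal.ofReal (K * (C * εk k)) := by
    intro k
    exact density_collar hd 𝒳 hcomp hconv hr hball hne Q q hQd hqsupp hK0 hqK (εk k) (hεk0 k)
  -- term bound after multiplying by L^{1/d}
  have hLpow0 : 0 ≤ L ^ ((1:ℝ)/d) := Real.rpow_nonneg hL.le _
  have hterm : ∀ k : ℕ, ENNReal.ofReal (L ^ ((1:ℝ)/d)) *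
      (ENNReal.ofReal (Real.exp (-(k:ℝ))) * ENNReal.ofReal (K * (C * εk k))) ≤
      ENNReal.ofReal (2 * (K * C)) * ENNReal.ofReal (2 / E) ^ k := by
    intro k
    rw [← ENNReal.ofReal_mul (Real.exp_pos _).le, ← ENNReal.ofReal_mul hLpow0,
      ← ENNReal.ofReal_pow (by positivity), ← ENNReal.ofReal_mul (by positivity)]
    apply ENNReal.ofReal_le_ofReal
    have hLε : L ^ ((1:ℝ)/d) * εk k = ((k:ℝ) + 2) ^ ((1:ℝ)/d) := by
      rw [hεk, ← Real.mul_rpow hL.le (by positivity)]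
      congr 1
      field_simp
    have hexp : Real.exp (-(k:ℝ)) = (E ^ k)⁻¹ := by
      rw [Real.exp_neg, hE, ← Real.exp_nat_mul]
      norm_num
    have hk2 : ((k:ℝ) + 2) ^ ((1:ℝ)/d) ≤ (k:ℝ) + 2 := by
      calc ((k:ℝ) + 2) ^ ((1:ℝ)/d) ≤ ((k:ℝ) + 2) ^ (1:ℝ) := by
            apply Real.rpow_le_rpow_of_exponent_le (by linarith [Nat.cast_nonneg (α := ℝ) k])
            rw [div_le_one hdR]
            exact_mod_cast hd
        _ = (k:ℝ) + 2 := Real.rpow_one _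
    have hk2' : (k:ℝ) + 2 ≤ 2 * 2 ^ k := by
      have h1 : k + 2 ≤ 2 * 2 ^ k := by
        have := Nat.lt_two_pow_self (n := k)
        have h2 : 1 ≤ 2 ^ k := Nat.one_le_two_pow
        omega
      exact_mod_cast h1
    calc L ^ ((1:ℝ)/d) * (Real.exp (-(k:ℝ)) * (K * (C * εk k)))
        = (K * C) * (((k:ℝ) + 2) ^ ((1:ℝ)/d) * (E ^ k)⁻¹) := by
          rw [hexp, ← hLε]; ring
      _ ≤ (K * C) * (((k:ℝ) + 2) * (E ^ k)⁻¹) := by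
          apply mul_le_mul_of_nonneg_left _ (by positivity)
          exact mul_le_mul_of_nonneg_right hk2 (by positivity)
      _ ≤ (K * C) * ((2 * 2 ^ k) * (E ^ k)⁻¹) := by
          apply mul_le_mul_of_nonneg_left _ (by positivity)
          exact mul_le_mul_of_nonneg_right hk2' (by positivity)
      _ = 2 * (K * C) * (2 / E) ^ k := by
          rw [div_pow]
          field_simp
  -- put everything together in ℝ≥0∞
  have hmain : ENNReal.ofReal (L ^ ((1:ℝ)/d)) * I ≤ Mtop := by
    calc ENNReal.ofReal (L ^ ((1:ℝ)/d)) * I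
        ≤ ENNReal.ofReal (L ^ ((1:ℝ)/d)) *
            ∑' k : ℕ, ENNReal.ofReal (Real.exp (-(k:ℝ))) * Q (Sk k) :=
          mul_le_mul_right hIbound _
      _ = ∑' k : ℕ, ENNReal.ofReal (L ^ ((1:ℝ)/d)) *
            (ENNReal.ofReal (Real.exp (-(k:ℝ))) * Q (Sk k)) := ENNReal.tsum_mul_left.symm
      _ ≤ ∑' k : ℕ, ENNReal.ofReal (2 * (K * C)) * ENNReal.ofReal (2 / E) ^ k := by
          apply ENNReal.tsum_le_tsum
          intro k
          refine le_trans (mul_le_mul_right (mul_le_mul_right (hQSk k) _) _) (hterm k)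
      _ = ENNReal.ofReal (2 * (K * C)) * ∑' k : ℕ, ENNReal.ofReal (2 / E) ^ k :=
          ENNReal.tsum_mul_left
      _ = Mtop := by rw [ENNReal.tsum_geometric, hMtop]
  -- conclude
  rw [hint_eq, ← ENNReal.toReal_ofReal hLpow0, ← ENNReal.toReal_mul]
  exact ENNReal.toReal_mono hMtopne hmain
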